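/- Let L be a squarefree positive integer, k a positive integer coprime to L, and p₁, …, p_s distinct primes such that each p_i + 1 = d_i · k for some divisor d_i of L, and such that p₁ p₂ ⋯ p_s ≡ -1 (mod L) and p₁ p₂ ⋯ p_s ≡ -1 (mod k). Then n = p₁ ⋯ p_s satisfies: for every prime p dividing n, p + 1 divides n + 1. -/
import Mathlib


theorem lucas_carmichael_construction (L k : ℕ) (hL : 0 < L) (hsf : Squarefree L)
    (hk : 0 < k) (hcop : Nat.Coprime k L)
    (ps : Finset ℕ) (hps : ∀ p ∈ ps, p.Prime)
    (hdk : ∀ p ∈ ps, ∃ d : ℕ, d ∣ L ∧ p + 1 = d * k)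
    (hL1 : ((∏ p ∈ ps, p : ℕ) : ℤ) ≡ -1 [ZMOD L])
    (hk1 : ((∏ p ∈ ps, p : ℕ) : ℤ) ≡ -1 [ZMOD k]) :
    ∀ p : ℕ, p.Prime → p ∣ ∏ p ∈ ps, p → p + 1 ∣ (∏ p ∈ ps, p) + 1 := by
  intro p hp hpdvd
  set n : ℕ := ∏ p ∈ ps, p with hn
  -- p ∈ ps
  obtain ⟨q, hq, hpq⟩ := hp.prime.exists_mem_finset_dvd hpdvd
  have hpq' : p = q := ((Nat.prime_dvd_prime_iff_eq hp (hps q hq)).mp hpq)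
  subst hpq'
  obtain ⟨d, hdL, hpk⟩ := hdk p hq
  -- L ∣ n + 1 and k ∣ n + 1 over ℤ
  have hLdvd : (L : ℤ) ∣ (n : ℤ) + 1 := by
    have := hL1.sub_right (-1)
    simpa [sub_neg_eq_add] using (Int.ModEq.dvd hL1.symm)
  have hkdvd : (k : ℤ) ∣ (n : ℤ) + 1 := by
    simpa [sub_neg_eq_add] using (Int.ModEq.dvd hk1.symm)
  have hLdvdN : L ∣ n + 1 := by exact_mod_cast hLdvd
  have hkdvdN : k ∣ n + 1 := by exact_mod_cast hkdvd
  have hLk : L * k ∣ n + 1 := (Nat.Coprime.mul_dvd_of_dvd_of_dvd hcop.symm hLdvdN hkdvdN)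
  calc p + 1 = d * k := hpk
    _ ∣ L * k := mul_dvd_mul_right hdL k
    _ ∣ n + 1 := hLk
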